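/- arXiv:2507.06604 — 2 statements merged into one kernel-verified Lean document; each statement's English description precedes it below -/
import Mathlib

section
/- det( a₁₁ − a₁₂·a₂₂⁻¹·a₂₁ ) = ψ₁⁻²·ψ₂^{n−1}·( 2ψ₁ψ₂ − |s|² ), and det(a₂₂) = ψ₁^{n+1}. -/
/-!
Since `z* z = ψ₁ - 1`, the block `a₂₂ = ψ₁ (1 + z z*)` has inverse `ψ₁⁻¹ (1 - ψ₁⁻¹ z z*)`, and the
Schur complement collapses to `ψ₂ (1 - ψ₁⁻¹ z̄ zᵀ) + v v̄ᵀ` with `v = ξᵀ - ψ₁⁻¹ s z̄`.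
Factoring out `1 - ψ₁⁻¹ z̄ zᵀ` (determinant `ψ₁⁻¹`, inverse `1 + z̄ zᵀ`) leaves `ψ₂ + x yᵀ`, whose
determinant `ψ₂ ^ (n - 1) (ψ₂ + yᵀ x)` is valid also at `ψ₂ = 0`, so no case distinction is needed.
All of this is algebra over a field once `z̄` and `ξ̄` are treated as vectors independent of `z`
and `ξ`, tied to them only through `z* z = ψ₁ - 1` and `ψ₂ = ‖ξ‖² + |s_xz|²`.
-/

open Matrix

namespace Matrix

variable {ι R : Type*} [Fintype ι] [DecidableEq ι] [CommRing R]

theorem det_one_add_vecMulVec (u v : ι → R) : det (1 + vecMulVec u v) = 1 + v ⬝ᵥ u := by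
  rw [vecMulVec_eq Unit, det_one_add_replicateCol_mul_replicateRow]

theorem det_smul_one_add_vecMulVec [Nonempty ι] (t : R) (u v : ι → R) :
    det (t • 1 + vecMulVec u v) = t ^ (Fintype.card ι - 1) * (t + v ⬝ᵥ u) := by
  obtain ⟨k, hk⟩ : ∃ k, Fintype.card ι = k + 1 := Nat.exists_eq_add_one.mpr Fintype.card_pos
  rw [← sub_neg_eq_add, ← neg_vecMulVec, smul_one_eq_diagonal, ← scalar_apply, ← eval_charpoly,
    charpoly_vecMulVec]
  simp only [Polynomial.eval_sub, Polynomial.eval_smul, Polynomial.eval_pow, Polynomial.eval_X,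
    neg_dotProduct, smul_eq_mul, hk, Nat.add_sub_cancel, dotProduct_comm u v]
  ring

end Matrix

section SchurComplement

variable {ι K : Type*} [Fintype ι] [DecidableEq ι] [Field K]
  {ψ₁ : K} (hψ₁ : ψ₁ ≠ 0) {z w : ι → K} (hwz : w ⬝ᵥ z = ψ₁ - 1)
include hψ₁ hwz

theorem inv_smul_one_add_vecMulVec :
    (ψ₁ • (1 + vecMulVec z w))⁻¹ = ψ₁⁻¹ • (1 - ψ₁⁻¹ • vecMulVec z w) := by
  refine inv_eq_right_inv ?_
  simp only [Matrix.smul_mul, Matrix.mul_smul, Matrix.add_mul, Matrix.mul_sub, Matrix.one_mul,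
    Matrix.mul_one, vecMulVec_mul_vecMulVec, hwz, vecMulVec_smul]
  match_scalars
  · field_simp
  · field_simp
    ring

theorem one_sub_smul_vecMulVec_mul_one_add_vecMulVec :
    (1 - ψ₁⁻¹ • vecMulVec w z) * (1 + vecMulVec w z) = 1 := by
  simp only [Matrix.sub_mul, Matrix.mul_add, Matrix.one_mul, Matrix.mul_one, Matrix.smul_mul,
    vecMulVec_mul_vecMulVec, dotProduct_comm z w, hwz, vecMulVec_smul]
  match_scalars
  · rfl
  · field_simp
    ring

theorem det_smul_one_sub_vecMulVec_add_vecMulVec [Nonempty ι] (t : K) (v v' : ι → K) :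
    det (t • (1 - ψ₁⁻¹ • vecMulVec w z) + vecMulVec v v')
      = ψ₁⁻¹ * t ^ (Fintype.card ι - 1) * (t + v' ⬝ᵥ v + (z ⬝ᵥ v) * (v' ⬝ᵥ w)) := by
  have hdet : det (1 - ψ₁⁻¹ • vecMulVec w z) = ψ₁⁻¹ := by
    rw [sub_eq_add_neg, ← neg_smul, ← smul_vecMulVec, det_one_add_vecMulVec, dotProduct_smul,
      dotProduct_comm, hwz, smul_eq_mul]
    linear_combination -inv_mul_cancel₀ hψ₁
  have hfactor : t • (1 - ψ₁⁻¹ • vecMulVec w z) + vecMulVec v v'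
      = (1 - ψ₁⁻¹ • vecMulVec w z) * (t • 1 + vecMulVec ((1 + vecMulVec w z) *ᵥ v) v') := by
    rw [Matrix.mul_add, Matrix.mul_smul, Matrix.mul_one, ← mul_vecMulVec, ← Matrix.mul_assoc,
      one_sub_smul_vecMulVec_mul_one_add_vecMulVec hψ₁ hwz, Matrix.one_mul]
  rw [hfactor, det_mul, hdet, det_smul_one_add_vecMulVec, Matrix.add_mulVec, one_mulVec,
    vecMulVec_mulVec, op_smul_eq_smul, dotProduct_add, dotProduct_smul, smul_eq_mul]
  ring

variable {ψ₂ σ σ' : K} {u u' : ι → K} (hψ₂ : ψ₂ = u ⬝ᵥ u' + σ * σ')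
include hψ₂

theorem schurComplement_eq_smul_add_vecMulVec :
    ψ₂ • 1 - σ • vecMulVec w u' - σ' • vecMulVec u z + ψ₁ • vecMulVec u u'
      - (ψ₁ • vecMulVec u w + vecMulVec w u - σ • vecMulVec w w)
        * (ψ₁ • (1 + vecMulVec z w))⁻¹
        * (ψ₁ • vecMulVec z u' + vecMulVec u' z - σ' • vecMulVec z z)
    = ψ₂ • (1 - ψ₁⁻¹ • vecMulVec w z)
      + vecMulVec (u - (ψ₁⁻¹ * (σ + u ⬝ᵥ z)) • w) (u' - (ψ₁⁻¹ * (σ' + w ⬝ᵥ u')) • z) := by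
  rw [inv_smul_one_add_vecMulVec hψ₁ hwz]
  subst hψ₂
  simp only [Matrix.smul_mul, Matrix.mul_smul, Matrix.add_mul, Matrix.mul_add, Matrix.sub_mul,
    Matrix.mul_sub, Matrix.mul_one, vecMulVec_mul_vecMulVec, vecMulVec_smul, smul_vecMulVec,
    sub_vecMulVec, vecMulVec_sub, hwz]
  match_scalars <;> field_simp <;> ring

theorem det_schurComplement [Nonempty ι] :
    det (ψ₂ • 1 - σ • vecMulVec w u' - σ' • vecMulVec u z + ψ₁ • vecMulVec u u'
      - (ψ₁ • vecMulVec u w + vecMulVec w u - σ • vecMulVec w w)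
        * (ψ₁ • (1 + vecMulVec z w))⁻¹
        * (ψ₁ • vecMulVec z u' + vecMulVec u' z - σ' • vecMulVec z z))
    = ψ₁⁻¹ ^ 2 * ψ₂ ^ (Fintype.card ι - 1)
      * (2 * ψ₁ * ψ₂ - (σ + u ⬝ᵥ z) * (σ' + w ⬝ᵥ u')) := by
  rw [schurComplement_eq_smul_add_vecMulVec hψ₁ hwz hψ₂,
    det_smul_one_sub_vecMulVec_add_vecMulVec hψ₁ hwz]
  simp only [dotProduct_sub, sub_dotProduct, dotProduct_smul, smul_dotProduct, smul_eq_mul,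
    dotProduct_comm z w, hwz, dotProduct_comm u' u, dotProduct_comm z u, dotProduct_comm u' w]
  subst hψ₂
  field_simp
  ring

end SchurComplement

theorem Complex.star_dotProduct_self {ι : Type*} [Fintype ι] (v : ι → ℂ) :
    star v ⬝ᵥ v = ((∑ i, Complex.normSq (v i) : ℝ) : ℂ) := by
  push_cast
  simp only [dotProduct, Pi.star_apply, Complex.star_def, Complex.normSq_eq_conj_mul_self]

theorem stmt_13 (n : ℕ) (hn : 1 ≤ n) (s : ℂ) (z ξ : Fin n → ℂ) :
    let sxz : ℂ := s - ∑ i, ξ i * z i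
    let ψ₁r : ℝ := (∑ i, Complex.normSq (z i)) + 1
    let ψ₂r : ℝ := (∑ i, Complex.normSq (ξ i)) + Complex.normSq sxz
    let τr : ℝ := ψ₁r * ψ₂r
    let τ₀r : ℝ := Complex.normSq s
    let ψ₁ : ℂ := (ψ₁r : ℂ)
    let ψ₂ : ℂ := (ψ₂r : ℂ)
    let τ : ℂ := (τr : ℂ)
    let τ₀ : ℂ := (τ₀r : ℂ)
    let a11 : Matrix (Fin n) (Fin n) ℂ :=
      ψ₂ • 1 - sxz • Matrix.vecMulVec (star z) (star ξ)
        - star sxz • Matrix.vecMulVec ξ z + ψ₁ • Matrix.vecMulVec ξ (star ξ)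
    let a12 : Matrix (Fin n) (Fin n) ℂ :=
      ψ₁ • Matrix.vecMulVec ξ (star z) + Matrix.vecMulVec (star z) ξ
        - sxz • Matrix.vecMulVec (star z) (star z)
    let a21 : Matrix (Fin n) (Fin n) ℂ :=
      ψ₁ • Matrix.vecMulVec z (star ξ) + Matrix.vecMulVec (star ξ) z
        - star sxz • Matrix.vecMulVec z z
    let a22 : Matrix (Fin n) (Fin n) ℂ := ψ₁ • (1 + Matrix.vecMulVec z (star z))
    let A' : Matrix (Fin n ⊕ Fin n) (Fin n ⊕ Fin n) ℂ := Matrix.fromBlocks a11 a12 a21 a22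
    let b : Fin n ⊕ Fin n → ℂ :=
      Sum.elim (fun i => ψ₂ * star (z i) - ψ₁ * star sxz * ξ i)
               (fun i => ψ₁ * (star (ξ i) - star sxz * z i))
    (a11 - a12 * a22⁻¹ * a21).det = ψ₁⁻¹ ^ 2 * ψ₂ ^ (n - 1) * (2 * ψ₁ * ψ₂ - τ₀) ∧
      a22.det = ψ₁ ^ (n + 1) := by
  intro sxz ψ₁r ψ₂r τr τ₀r ψ₁ ψ₂ τ τ₀ a11 a12 a21 a22 A' b
  have : Nonempty (Fin n) := ⟨⟨0, hn⟩⟩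
  have hψ₁ : ψ₁ ≠ 0 := by
    have := Finset.sum_nonneg fun i (_ : i ∈ Finset.univ) => Complex.normSq_nonneg (z i)
    exact Complex.ofReal_ne_zero.mpr (show 0 < ψ₁r by simp only [ψ₁r]; linarith).ne'
  have hzz : star z ⬝ᵥ z = ψ₁ - 1 := by
    rw [Complex.star_dotProduct_self]
    push_cast [ψ₁, ψ₁r]
    ring
  have hψ₂ : ψ₂ = ξ ⬝ᵥ star ξ + sxz * star sxz := by
    rw [dotProduct_comm, Complex.star_dotProduct_self, Complex.star_def, Complex.mul_conj]
    push_cast [ψ₂, ψ₂r]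
    rfl
  have hs : (sxz + ξ ⬝ᵥ z) * (star sxz + star z ⬝ᵥ star ξ) = τ₀ := by
    have hsxz : sxz + ξ ⬝ᵥ z = s := sub_add_cancel s _
    rw [star_dotProduct_star, ← star_add, hsxz, Complex.star_def, Complex.mul_conj]
  refine ⟨?_, ?_⟩
  · rw [det_schurComplement hψ₁ hzz hψ₂, hs, Fintype.card_fin]
  · rw [det_smul, det_one_add_vecMulVec, hzz, Fintype.card_fin, pow_succ]
    ring
end

section
/- b₁ − a₁₂·a₂₂⁻¹·b₂ = s̄·ψ₁⁻¹·( s·z̄ − ψ₁·ξᵀ ). -/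
/-
The block a₂₂ is ψ₁ times the rank-one perturbation 1 + z z* of the identity, and z* z = ψ₁ − 1,
so Sherman–Morrison gives (1 + z z*)⁻¹ = 1 − ψ₁⁻¹ z z*. Applied to b₂ this yields
a₂₂⁻¹ b₂ = ξ* − (s̄ / ψ₁) z, the s_xz-terms collapsing because conj(s_xz) + conj(ξ z) = s̄.
Applying a₁₂ to this vector produces only multiples of z̄ and ξᵀ, and comparing the two
coefficients with those of b₁ is a scalar identity in ψ₁, s, ξ z and ξ ξ*.
-/

open Matrix

namespace Matrix

variable {K n : Type*} [Field K] [Fintype n] [DecidableEq n]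

theorem inv_one_add_vecMulVec (u v : n → K) (h : 1 + v ⬝ᵥ u ≠ 0) :
    (1 + vecMulVec u v)⁻¹ = 1 - (1 + v ⬝ᵥ u)⁻¹ • vecMulVec u v := by
  refine inv_eq_right_inv ?_
  rw [Matrix.add_mul, Matrix.one_mul, Matrix.mul_sub, Matrix.mul_one, Matrix.mul_smul,
    vecMulVec_mul_vecMulVec, vecMulVec_smul]
  match_scalars
  · rfl
  · field_simp
    ring

theorem inv_smul₀ {k : K} (hk : k ≠ 0) (A : Matrix n n K) : (k • A)⁻¹ = k⁻¹ • A⁻¹ := by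
  by_cases hA : IsUnit A.det
  · exact inv_smul' A (Units.mk0 k hk) hA
  · have hkA : ¬IsUnit (k • A).det := by
      simpa [det_smul, hk] using hA
    rw [nonsing_inv_apply_not_isUnit _ hA, nonsing_inv_apply_not_isUnit _ hkA, smul_zero]

end Matrix

namespace SchurBlock

variable {K n : Type*} [Field K] [StarRing K] [Fintype n] (s : K) (z ξ : n → K)

def ψ₁ : K := 1 + star z ⬝ᵥ z

theorem star_dotProduct_self_eq_ψ₁_sub_one : star z ⬝ᵥ z = ψ₁ z - 1 := by
  rw [ψ₁]
  ring

def sxz : K := s - ξ ⬝ᵥ z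

def ψ₂ : K := ξ ⬝ᵥ star ξ + sxz s z ξ * star (sxz s z ξ)

def a₁₂ : Matrix n n K :=
  ψ₁ z • vecMulVec ξ (star z) + vecMulVec (star z) ξ - sxz s z ξ • vecMulVec (star z) (star z)

def b₁ : n → K := ψ₂ s z ξ • star z - (ψ₁ z * star (sxz s z ξ)) • ξ

def b₂ : n → K := ψ₁ z • (star ξ - star (sxz s z ξ) • z)

variable [DecidableEq n]

def a₂₂ : Matrix n n K := ψ₁ z • (1 + vecMulVec z (star z))

variable {z}

theorem a₂₂_inv_mulVec_b₂ (h : ψ₁ z ≠ 0) :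
    (a₂₂ z)⁻¹ *ᵥ b₂ s z ξ = star ξ - ((ψ₁ z)⁻¹ * star s) • z := by
  rw [a₂₂, b₂, inv_smul₀ h, smul_mulVec, mulVec_smul, smul_smul, inv_mul_cancel₀ h, one_smul,
    inv_one_add_vecMulVec _ _ h, sub_mulVec, one_mulVec, smul_mulVec, vecMulVec_mulVec,
    op_smul_eq_smul, dotProduct_sub, dotProduct_smul, star_dotProduct_star,
    star_dotProduct_self_eq_ψ₁_sub_one, add_sub_cancel, sxz, star_sub]
  match_scalars
  · rfl
  · field_simp
    ring

theorem b₁_sub_a₁₂_mul_a₂₂_inv_mulVec_b₂ (h : ψ₁ z ≠ 0) :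
    b₁ s z ξ - (a₁₂ s z ξ * (a₂₂ z)⁻¹) *ᵥ b₂ s z ξ
      = (star s * (ψ₁ z)⁻¹) • (s • star z - ψ₁ z • ξ) := by
  rw [← mulVec_mulVec, a₂₂_inv_mulVec_b₂ s ξ h, b₁, ψ₂, a₁₂, sub_mulVec, add_mulVec,
    smul_mulVec, smul_mulVec, vecMulVec_mulVec, vecMulVec_mulVec, vecMulVec_mulVec]
  simp only [op_smul_eq_smul, dotProduct_sub, dotProduct_smul, star_dotProduct_star,
    star_dotProduct_self_eq_ψ₁_sub_one, sxz, star_sub, smul_eq_mul]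
  match_scalars <;> field_simp <;> ring

end SchurBlock

theorem Complex.ofReal_sum_normSq {n : Type*} [Fintype n] (v : n → ℂ) :
    ((∑ i, Complex.normSq (v i) : ℝ) : ℂ) = star v ⬝ᵥ v := by
  push_cast
  exact Finset.sum_congr rfl fun i _ => Complex.normSq_eq_conj_mul_self

theorem stmt_15_general (n : ℕ) (s : ℂ) (z ξ : Fin n → ℂ) :
    let sxz : ℂ := s - ∑ i, ξ i * z i
    let ψ₁r : ℝ := (∑ i, Complex.normSq (z i)) + 1
    let ψ₂r : ℝ := (∑ i, Complex.normSq (ξ i)) + Complex.normSq sxz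
    let τr : ℝ := ψ₁r * ψ₂r
    let τ₀r : ℝ := Complex.normSq s
    let ψ₁ : ℂ := (ψ₁r : ℂ)
    let ψ₂ : ℂ := (ψ₂r : ℂ)
    let τ : ℂ := (τr : ℂ)
    let τ₀ : ℂ := (τ₀r : ℂ)
    let a11 : Matrix (Fin n) (Fin n) ℂ :=
      ψ₂ • 1 - sxz • Matrix.vecMulVec (star z) (star ξ)
        - star sxz • Matrix.vecMulVec ξ z + ψ₁ • Matrix.vecMulVec ξ (star ξ)
    let a12 : Matrix (Fin n) (Fin n) ℂ :=
      ψ₁ • Matrix.vecMulVec ξ (star z) + Matrix.vecMulVec (star z) ξ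
        - sxz • Matrix.vecMulVec (star z) (star z)
    let a21 : Matrix (Fin n) (Fin n) ℂ :=
      ψ₁ • Matrix.vecMulVec z (star ξ) + Matrix.vecMulVec (star ξ) z
        - star sxz • Matrix.vecMulVec z z
    let a22 : Matrix (Fin n) (Fin n) ℂ := ψ₁ • (1 + Matrix.vecMulVec z (star z))
    let A' : Matrix (Fin n ⊕ Fin n) (Fin n ⊕ Fin n) ℂ := Matrix.fromBlocks a11 a12 a21 a22
    let b : Fin n ⊕ Fin n → ℂ :=
      Sum.elim (fun i => ψ₂ * star (z i) - ψ₁ * star sxz * ξ i)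
               (fun i => ψ₁ * (star (ξ i) - star sxz * z i))
    let b1 : Fin n → ℂ := fun i => ψ₂ * star (z i) - ψ₁ * star sxz * ξ i
    let b2 : Fin n → ℂ := fun i => ψ₁ * (star (ξ i) - star sxz * z i)
    b1 - (a12 * a22⁻¹) *ᵥ b2 = fun i => star s * ψ₁⁻¹ * (s * star (z i) - ψ₁ * ξ i) := by
  intro _ _ _ _ _ ψ₁ ψ₂ _ _ _ _ _ _ _ _ _ _
  have hψ₁ : ψ₁ = SchurBlock.ψ₁ z := by
    rw [SchurBlock.ψ₁, ← Complex.ofReal_sum_normSq, add_comm, ← Complex.ofReal_one,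
      ← Complex.ofReal_add]
  have hψ₂ : ψ₂ = ξ ⬝ᵥ star ξ + SchurBlock.sxz s z ξ * star (SchurBlock.sxz s z ξ) := by
    rw [dotProduct_comm, ← Complex.ofReal_sum_normSq, Complex.star_def, Complex.mul_conj,
      ← Complex.ofReal_add]
    rfl
  have hψ₁_ne : SchurBlock.ψ₁ z ≠ 0 := by
    open scoped ComplexOrder in
    exact (add_pos_of_pos_of_nonneg one_pos (dotProduct_star_self_nonneg z)).ne'
  have key := SchurBlock.b₁_sub_a₁₂_mul_a₂₂_inv_mulVec_b₂ s ξ hψ₁_ne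
  rw [SchurBlock.b₁, SchurBlock.a₁₂, SchurBlock.a₂₂, SchurBlock.b₂, SchurBlock.ψ₂, ← hψ₂,
    ← hψ₁] at key
  -- entrywise lambdas vs. `•`/`-` on vectors and `∑` vs. `⬝ᵥ` agree definitionally
  exact key

theorem stmt_15 (n : ℕ) (hn : 1 ≤ n) (s : ℂ) (z ξ : Fin n → ℂ) :
    let sxz : ℂ := s - ∑ i, ξ i * z i
    let ψ₁r : ℝ := (∑ i, Complex.normSq (z i)) + 1
    let ψ₂r : ℝ := (∑ i, Complex.normSq (ξ i)) + Complex.normSq sxz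
    let τr : ℝ := ψ₁r * ψ₂r
    let τ₀r : ℝ := Complex.normSq s
    let ψ₁ : ℂ := (ψ₁r : ℂ)
    let ψ₂ : ℂ := (ψ₂r : ℂ)
    let τ : ℂ := (τr : ℂ)
    let τ₀ : ℂ := (τ₀r : ℂ)
    let a11 : Matrix (Fin n) (Fin n) ℂ :=
      ψ₂ • 1 - sxz • Matrix.vecMulVec (star z) (star ξ)
        - star sxz • Matrix.vecMulVec ξ z + ψ₁ • Matrix.vecMulVec ξ (star ξ)
    let a12 : Matrix (Fin n) (Fin n) ℂ :=
      ψ₁ • Matrix.vecMulVec ξ (star z) + Matrix.vecMulVec (star z) ξ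
        - sxz • Matrix.vecMulVec (star z) (star z)
    let a21 : Matrix (Fin n) (Fin n) ℂ :=
      ψ₁ • Matrix.vecMulVec z (star ξ) + Matrix.vecMulVec (star ξ) z
        - star sxz • Matrix.vecMulVec z z
    let a22 : Matrix (Fin n) (Fin n) ℂ := ψ₁ • (1 + Matrix.vecMulVec z (star z))
    let A' : Matrix (Fin n ⊕ Fin n) (Fin n ⊕ Fin n) ℂ := Matrix.fromBlocks a11 a12 a21 a22
    let b : Fin n ⊕ Fin n → ℂ :=
      Sum.elim (fun i => ψ₂ * star (z i) - ψ₁ * star sxz * ξ i)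
               (fun i => ψ₁ * (star (ξ i) - star sxz * z i))
    let b1 : Fin n → ℂ := fun i => ψ₂ * star (z i) - ψ₁ * star sxz * ξ i
    let b2 : Fin n → ℂ := fun i => ψ₁ * (star (ξ i) - star sxz * z i)
    b1 - (a12 * a22⁻¹) *ᵥ b2 = fun i => star s * ψ₁⁻¹ * (s * star (z i) - ψ₁ * ξ i) :=
  stmt_15_general n s z ξ
end
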